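/- For every bicomplex number s, the product of s with all seven of its nontrivial conjugates and pseudoconjugates equals the real number |a|⁴|b|⁴, where a, b are the idempotent components of s; consequently s is invertible if and only if this product is nonzero. -/

import Mathlib

noncomputable section

/-- The bicomplex numbers, modeled via their idempotent representation as `ℂ × ℂ`
(componentwise addition and multiplication). -/
abbrev BC : Type := ℂ × ℂ

namespace BC

/-- The imaginary unit `i₁`. -/
def i1 : BC := (Complex.I, Complex.I)

/-- The imaginary unit `i₂`. -/
def i2 : BC := (-Complex.I, Complex.I)

/-- The hyperbolic unit `j₁ = i₁ i₂`. -/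
def j1 : BC := (1, -1)

/-- The idempotent `e₁ = (1 + j₁)/2`. -/
def e1 : BC := (1, 0)

/-- The idempotent `e₂ = (1 - j₁)/2`. -/
def e2 : BC := (0, 1)

/-- The embedding of `ℂ(i₁)` into the bicomplex numbers. -/
def C (z : ℂ) : BC := (z, z)

end BC

open BC

theorem BC.C_mul_e1_add_C_mul_e2 (z w : ℂ) : C z * e1 + C w * e2 = (z, w) := by
  ext <;> simp [C, e1, e2]

theorem Complex.sq_mul_conj_mul_sq_mul_conj (z w : ℂ) :
    (z * starRingEnd ℂ z) ^ 2 * (w * starRingEnd ℂ w) ^ 2 = ((‖z‖ ^ 4 * ‖w‖ ^ 4 : ℝ) : ℂ) := by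
  rw [Complex.mul_conj', Complex.mul_conj']
  push_cast
  ring

-- Multiplication is componentwise, and each component contains `a`, `ā`, `b`, `b̄` twice.
theorem BC.prod_conjugates_eq_algebraMap (a b : ℂ) :
    ((a, b) : BC) * (b, a) * (starRingEnd ℂ b, starRingEnd ℂ a)
      * (starRingEnd ℂ a, starRingEnd ℂ b) * (starRingEnd ℂ a, b) * (a, starRingEnd ℂ b)
      * (starRingEnd ℂ b, a) * (b, starRingEnd ℂ a)
      = algebraMap ℝ BC (‖a‖ ^ 4 * ‖b‖ ^ 4) := by
  simp only [Prod.mk_mul_mk, Prod.algebraMap_apply, Complex.coe_algebraMap, Prod.mk.injEq]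
  constructor <;> linear_combination Complex.sq_mul_conj_mul_sq_mul_conj a b

/-- The product of `s = a e₁ + b e₂` with its seven nontrivial conjugates and
pseudoconjugates equals the real number `|a|⁴|b|⁴`; hence `s` is invertible iff this
product is nonzero. -/
theorem stmt_19 (a b : ℂ) :
    (C a * e1 + C b * e2)
      * (C b * e1 + C a * e2)
      * (C (starRingEnd ℂ b) * e1 + C (starRingEnd ℂ a) * e2)
      * (C (starRingEnd ℂ a) * e1 + C (starRingEnd ℂ b) * e2)
      * (C (starRingEnd ℂ a) * e1 + C b * e2)
      * (C a * e1 + C (starRingEnd ℂ b) * e2)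
      * (C (starRingEnd ℂ b) * e1 + C a * e2)
      * (C b * e1 + C (starRingEnd ℂ a) * e2)
      = algebraMap ℝ BC (‖a‖ ^ 4 * ‖b‖ ^ 4) ∧
    (IsUnit (C a * e1 + C b * e2) ↔
      (C a * e1 + C b * e2)
        * (C b * e1 + C a * e2)
        * (C (starRingEnd ℂ b) * e1 + C (starRingEnd ℂ a) * e2)
        * (C (starRingEnd ℂ a) * e1 + C (starRingEnd ℂ b) * e2)
        * (C (starRingEnd ℂ a) * e1 + C b * e2)
        * (C a * e1 + C (starRingEnd ℂ b) * e2)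
        * (C (starRingEnd ℂ b) * e1 + C a * e2)
        * (C b * e1 + C (starRingEnd ℂ a) * e2) ≠ 0) := by
  simp only [BC.C_mul_e1_add_C_mul_e2, BC.prod_conjugates_eq_algebraMap, true_and]
  rw [map_ne_zero_iff _ (algebraMap ℝ BC).injective, Prod.isUnit_iff, isUnit_iff_ne_zero,
    isUnit_iff_ne_zero]
  simp
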